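/- arXiv:1909.03852 — 4 statements merged into one kernel-verified Lean document; each statement's English description precedes it below -/
import Mathlib

section
/- For a standard Gaussian random vector y in R^n and symmetric n×n real matrices A, B, C, the expectation of (y^T A y)(y^T B y)(y^T C y) equals tr(A)tr(B)tr(C) + 8 tr(ABC) + 2(tr(AB)tr(C) + tr(BC)tr(A) + tr(CA)tr(B)). -/
open Matrix MeasureTheory Real


noncomputable def gm (k : ℕ) : ℝ := ∫ t : ℝ, t ^ k * Real.exp (-t^2/2)

lemma integrable_pow_exp (k : ℕ) : Integrable fun t : ℝ => t ^ k * Real.exp (-t^2/2) := by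
  have h := integrable_rpow_mul_exp_neg_mul_sq (b := 1/2) (by norm_num) (s := (k:ℝ))
    (by exact_mod_cast neg_one_lt_zero.trans_le (Nat.cast_nonneg k))
  have e : (fun t : ℝ => t ^ ((k:ℝ)) * Real.exp (-(1/2) * t ^ 2)) = fun t : ℝ => t ^ k * Real.exp (-t^2/2) := by
    funext t; rw [Real.rpow_natCast, show -(1/2 : ℝ) * t ^ 2 = -t^2/2 by ring]
  rwa [e] at h

lemma gm_zero : gm 0 = Real.sqrt (2 * π) := by
  have h := integral_gaussian (1/2)
  rw [show (fun x : ℝ => Real.exp (-(1/2) * x ^ 2)) = fun t : ℝ => Real.exp (-t^2/2) from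
    funext fun t => by rw [show -(1/2:ℝ) * t ^ 2 = -t^2/2 by ring],
    show π / (1/2) = 2 * π by ring] at h
  simpa [gm] using h

lemma gm_odd (k : ℕ) (hk : Odd k) : gm k = 0 := by
  have h := integral_neg_eq_self (fun t : ℝ => t ^ k * Real.exp (-t^2/2)) (volume : Measure ℝ)
  simp only [hk.neg_pow, neg_sq, neg_mul, integral_neg] at h
  unfold gm
  linarith




lemma hasDerivAt_E (x : ℝ) : HasDerivAt (fun t : ℝ => Real.exp (-t^2/2)) (Real.exp (-x^2/2) * (-x)) x := by
  have h1 : HasDerivAt (fun t : ℝ => -t^2/2) (-x) x := by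
    have := ((hasDerivAt_pow 2 x).neg).div_const 2
    simpa using this.congr_deriv (by push_cast; ring)
  exact h1.exp

lemma gm_rec (k : ℕ) : gm (k + 2) = (k + 1) * gm k := by
  have hu : ∀ x : ℝ, HasDerivAt (fun t : ℝ => t ^ (k+1)) ((k+1) * x ^ k) x := by
    intro x; simpa using hasDerivAt_pow (k+1) x
  have hv := hasDerivAt_E
  have huv' : Integrable ((fun t : ℝ => t ^ (k+1)) * fun x => Real.exp (-x^2/2) * (-x)) := by
    have := (integrable_pow_exp (k+2)).neg
    apply this.congr; filter_upwards with t
    simp only [Pi.neg_apply, Pi.mul_apply]; ring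
  have hu'v : Integrable ((fun x : ℝ => (k+1 : ℝ) * x ^ k) * fun t => Real.exp (-t^2/2)) := by
    have := (integrable_pow_exp k).const_mul ((k:ℝ)+1)
    apply this.congr; filter_upwards with t
    simp only [Pi.mul_apply]; push_cast; ring
  have huv : Integrable ((fun t : ℝ => t ^ (k+1)) * fun t => Real.exp (-t^2/2)) := by
    apply (integrable_pow_exp (k+1)).congr; filter_upwards with t
    simp only [Pi.mul_apply]
  have h := integral_mul_deriv_eq_deriv_mul_of_integrable (fun x _ => hu x) (fun x _ => hv x) huv' hu'v huv
  have e1 : (∫ x : ℝ, x ^ (k+1) * (Real.exp (-x^2/2) * (-x))) = -gm (k+2) := by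
    rw [gm, ← integral_neg]; congr 1; funext t; ring
  have e2 : (∫ x : ℝ, ((k:ℝ)+1) * x ^ k * Real.exp (-x^2/2)) = ((k:ℝ)+1) * gm k := by
    rw [gm, ← MeasureTheory.integral_const_mul]; congr 1; funext t; ring
  rw [e1] at h
  push_cast
  rw [show -(∫ x : ℝ, ((k:ℝ)+1) * x ^ k * Real.exp (-x^2/2)) = -(((k:ℝ)+1) * gm k) by rw [e2]] at h
  linarith



noncomputable def mN (k : ℕ) : ℝ := gm k / Real.sqrt (2 * π)

lemma sqrt_two_pi_pos : (0:ℝ) < Real.sqrt (2 * π) :=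
  Real.sqrt_pos.2 (by positivity)

lemma mN_zero : mN 0 = 1 := by
  rw [mN, gm_zero, div_self sqrt_two_pi_pos.ne']

lemma mN_succ (c : ℕ) : mN (c + 1) = c * mN (c - 1) := by
  cases c with
  | zero => simp [mN, gm_odd 1 ⟨0, rfl⟩]
  | succ c => rw [mN, mN, gm_rec]; push_cast; ring

-- positions count
lemma sum_ind {α : Type*} [DecidableEq α] (L : List α) (a : α) :
    (∑ r : Fin L.length, if L.get r = a then (1:ℝ) else 0) = L.count a := by
  induction L with
  | nil => simp
  | cons b L ih =>
    show (∑ r : Fin (L.length + 1), if (b :: L).get r = a then (1:ℝ) else 0) = _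
    rw [Fin.sum_univ_succ]
    have e1 : ∀ r : Fin L.length, (b :: L).get r.succ = L.get r := fun r => rfl
    simp only [e1]
    rw [ih, List.count_cons]
    push_cast
    by_cases h : b = a
    · subst h; simp; ring
    · have h' : ¬ (a = b) := fun hh => h hh.symm
      simp [h, h']

lemma count_eraseIdx_add {α : Type*} [DecidableEq α] :
    ∀ (L : List α) (r : ℕ) (h : r < L.length) (x : α),
      L.count x = (L.eraseIdx r).count x + (if L.get ⟨r, h⟩ = x then 1 else 0)
  | [], r, h, x => absurd h (by simp)
  | b :: L, 0, h, x => by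
    show (b :: L).count x = L.count x + _
    simp only [List.count_cons, List.get]
    by_cases hx : x = b
    · subst hx; simp
    · simp [hx, Ne.symm hx]
  | b :: L, r+1, h, x => by
    have := count_eraseIdx_add L r (by simpa using h) x
    simp only [List.eraseIdx_cons_succ, List.count_cons, List.get_cons_succ]
    omega

variable {n : ℕ}

noncomputable def MM (L : List (Fin n)) : ℝ := ∏ x, mN (L.count x)

lemma MM_nil : MM (n := n) [] = 1 := by simp [MM, mN_zero]

lemma Mstep (a : Fin n) (L : List (Fin n)) :
    MM (a :: L) = ∑ r : Fin L.length, if L.get r = a then MM (L.eraseIdx r) else 0 := by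
  classical
  set P : ℝ := ∏ x ∈ Finset.univ.erase a, mN (L.count x) with hP
  have hL : MM (a :: L) = mN (L.count a + 1) * P := by
    rw [MM, ← Finset.mul_prod_erase Finset.univ _ (Finset.mem_univ a)]
    congr 1
    · congr 1; simp [List.count_cons]
    · apply Finset.prod_congr rfl
      intro x hx
      have hxa : x ≠ a := (Finset.mem_erase.1 hx).1
      congr 1; simp [List.count_cons, hxa, hxa.symm]
  have hterm : ∀ r : Fin L.length, L.get r = a →
      MM (L.eraseIdx r) = mN (L.count a - 1) * P := by
    intro r hr
    have key := fun x => count_eraseIdx_add L r r.isLt x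
    rw [MM, ← Finset.mul_prod_erase Finset.univ _ (Finset.mem_univ a)]
    congr 1
    · congr 1
      have := key a
      rw [hr] at this
      simp at this
      omega
    · apply Finset.prod_congr rfl
      intro x hx
      have hxa : x ≠ a := (Finset.mem_erase.1 hx).1
      have := key x
      rw [hr] at this
      rw [if_neg (fun hh => hxa hh.symm)] at this
      congr 1
      omega
  calc MM (a :: L) = (L.count a : ℝ) * (mN (L.count a - 1) * P) := by
        rw [hL, mN_succ]; ring
    _ = (∑ r : Fin L.length, if L.get r = a then (1:ℝ) else 0) * (mN (L.count a - 1) * P) := by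
        rw [sum_ind]
    _ = ∑ r : Fin L.length, if L.get r = a then MM (L.eraseIdx r) else 0 := by
        rw [Finset.sum_mul]
        apply Finset.sum_congr rfl
        intro r _
        by_cases hr : L.get r = a
        · rw [if_pos hr, if_pos hr, hterm r hr, one_mul]
        · rw [if_neg hr, if_neg hr, zero_mul]

lemma MM_pair (x y : Fin n) : MM [x, y] = if y = x then 1 else 0 := by
  rw [Mstep]
  have : (∑ r : Fin ([y] : List (Fin n)).length, if ([y] : List (Fin n)).get r = x then MM (([y] : List (Fin n)).eraseIdx r) else 0)
      = ∑ r : Fin 1, if ([y] : List (Fin n)).get r = x then MM (([y] : List (Fin n)).eraseIdx r) else 0 := rfl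
  rw [this, Fin.sum_univ_one]
  simp [MM_nil]

noncomputable def dd (a b : Fin n) : ℝ := if a = b then 1 else 0

lemma MM4 (a b c e : Fin n) :
    MM [a, b, c, e] = dd b a * dd e c + dd c a * dd e b + dd e a * dd c b := by
  rw [Mstep]
  have : (∑ r : Fin ([b,c,e] : List (Fin n)).length, if ([b,c,e] : List (Fin n)).get r = a then MM (([b,c,e] : List (Fin n)).eraseIdx r) else 0)
      = ∑ r : Fin 3, if ([b,c,e] : List (Fin n)).get r = a then MM (([b,c,e] : List (Fin n)).eraseIdx r) else 0 := rfl
  rw [this, Fin.sum_univ_three]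
  simp only [List.get, List.eraseIdx, MM_pair, dd]
  by_cases h1 : b = a <;> by_cases h2 : c = a <;> by_cases h3 : e = a <;>
    simp [h1, h2, h3] <;> ring

lemma MM6 (i j k l m p : Fin n) :
    MM [i, j, k, l, m, p] =
      dd j i * (dd l k * dd p m + dd m k * dd p l + dd p k * dd m l)
    + dd k i * (dd l j * dd p m + dd m j * dd p l + dd p j * dd m l)
    + dd l i * (dd k j * dd p m + dd m j * dd p k + dd p j * dd m k)
    + dd m i * (dd k j * dd p l + dd l j * dd p k + dd p j * dd l k)
    + dd p i * (dd k j * dd m l + dd l j * dd m k + dd m j * dd l k) := by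
  rw [Mstep]
  have : (∑ r : Fin ([j,k,l,m,p] : List (Fin n)).length, if ([j,k,l,m,p] : List (Fin n)).get r = i then MM (([j,k,l,m,p] : List (Fin n)).eraseIdx r) else 0)
      = ∑ r : Fin 5, if ([j,k,l,m,p] : List (Fin n)).get r = i then MM (([j,k,l,m,p] : List (Fin n)).eraseIdx r) else 0 := rfl
  rw [this, Fin.sum_univ_five]
  simp only [List.get, List.eraseIdx, MM4, dd]
  by_cases h1 : j = i <;> by_cases h2 : k = i <;> by_cases h3 : l = i <;>
    by_cases h4 : m = i <;> by_cases h5 : p = i <;>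
    simp [h1, h2, h3, h4, h5] <;> ring

lemma mN_def (k : ℕ) : mN k = (∫ t : ℝ, t ^ k * Real.exp (-t^2/2)) / Real.sqrt (2 * π) := rfl



lemma prod_map_count (L : List (Fin n)) (y : Fin n → ℝ) :
    (L.map y).prod = ∏ x, y x ^ L.count x := by
  induction L with
  | nil => simp
  | cons a L ih =>
    have : ∀ x, y x ^ (a :: L).count x = y x ^ L.count x * y x ^ (if a = x then 1 else 0) := by
      intro x; rw [← pow_add, List.count_cons]; simp
    simp only [List.map_cons, List.prod_cons, ih, this, Finset.prod_mul_distrib]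
    rw [show (∏ x, y x ^ (if a = x then 1 else 0)) = y a by
      simp [apply_ite (y · ^ ·), Finset.prod_ite_eq]]
    ring

lemma D_eq (y : Fin n → ℝ) :
    Real.exp (-(∑ i, y i ^ 2) / 2) / Real.sqrt ((2 * π) ^ n) =
      ∏ x, (Real.exp (-(y x)^2/2) / Real.sqrt (2 * π)) := by
  rw [Finset.prod_div_distrib, Finset.prod_const, Finset.card_univ, Fintype.card_fin,
    ← Real.exp_sum]
  congr 1
  · congr 1
    rw [← Finset.sum_div, ← Finset.sum_neg_distrib]
  · have : ∀ N : ℕ, Real.sqrt ((2*π)^N) = Real.sqrt (2*π) ^ N := by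
      intro N
      induction N with
      | zero => simp
      | succ N ih => rw [pow_succ, pow_succ, Real.sqrt_mul (by positivity), ih]
    exact this n

lemma integrable_g (c : ℕ) :
    Integrable fun t : ℝ => t ^ c * (Real.exp (-t^2/2) / Real.sqrt (2 * π)) := by
  have := (integrable_pow_exp c).div_const (Real.sqrt (2 * π))
  apply this.congr
  filter_upwards with t
  ring

lemma integrable_mono (L : List (Fin n)) :
    Integrable fun y : Fin n → ℝ =>
      (∏ x, y x ^ L.count x) * (Real.exp (-(∑ i, y i ^ 2) / 2) / Real.sqrt ((2 * π) ^ n)) := by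
  have h := MeasureTheory.Integrable.fintype_prod
    (f := fun (x : Fin n) (t : ℝ) => t ^ L.count x * (Real.exp (-t^2/2) / Real.sqrt (2 * π)))
    (fun x => integrable_g _)
  apply h.congr
  filter_upwards with y
  rw [Finset.prod_mul_distrib, D_eq]

lemma integral_monomial (L : List (Fin n)) :
    (∫ y : Fin n → ℝ,
      (∏ x, y x ^ L.count x) * (Real.exp (-(∑ i, y i ^ 2) / 2) / Real.sqrt ((2 * π) ^ n)))
      = MM L := by
  have h := MeasureTheory.integral_fintype_prod_eq_prod (𝕜 := ℝ) (ι := Fin n) (μ := fun _ => volume)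
    (f := fun (x : Fin n) (t : ℝ) => t ^ L.count x * (Real.exp (-t^2/2) / Real.sqrt (2 * π)))
  rw [← volume_pi] at h
  rw [show (∫ y : Fin n → ℝ,
      (∏ x, y x ^ L.count x) * (Real.exp (-(∑ i, y i ^ 2) / 2) / Real.sqrt ((2 * π) ^ n)))
    = ∫ y : Fin n → ℝ, ∏ x, (y x ^ L.count x * (Real.exp (-(y x)^2/2) / Real.sqrt (2 * π))) by
      congr 1; funext y; rw [Finset.prod_mul_distrib, D_eq], h, MM]
  apply Finset.prod_congr rfl
  intro x _
  rw [mN_def, ← integral_div]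
  congr 1; funext t; ring


lemma final_sum {n : ℕ} (A B C : Matrix (Fin n) (Fin n) ℝ)
    (hA : A.IsSymm) (hB : B.IsSymm) (hC : C.IsSymm) :
    (∑ i, ∑ j, ∑ k, ∑ l, ∑ m, ∑ p, A i j * B k l * C m p *
      (dd j i * (dd l k * dd p m + dd m k * dd p l + dd p k * dd m l)
     + dd k i * (dd l j * dd p m + dd m j * dd p l + dd p j * dd m l)
     + dd l i * (dd k j * dd p m + dd m j * dd p k + dd p j * dd m k)
     + dd m i * (dd k j * dd p l + dd l j * dd p k + dd p j * dd l k)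
     + dd p i * (dd k j * dd m l + dd l j * dd m k + dd m j * dd l k)))
    = A.trace * B.trace * C.trace + 8 * (A * B * C).trace +
        2 * ((A * B).trace * C.trace + (B * C).trace * A.trace +
          (C * A).trace * B.trace) := by
  have hA' : ∀ i j, A j i = A i j := fun i j => hA.apply i j
  have hB' : ∀ i j, B j i = B i j := fun i j => hB.apply i j
  have hC' : ∀ i j, C j i = C i j := fun i j => hC.apply i j
  simp only [dd, mul_add, mul_ite, ite_mul, one_mul, mul_one, zero_mul, mul_zero,
    Finset.sum_add_distrib, Finset.sum_ite_eq, Finset.sum_ite_eq', Finset.mem_univ, if_true,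
    Finset.sum_ite_irrel, Finset.sum_const_zero]
  have fac_right : ∀ (F : Fin n → Fin n → ℝ) (f : Fin n → ℝ),
      (∑ x, ∑ y, ∑ z, F x y * f z) = (∑ x, ∑ y, F x y) * (∑ z, f z) := by
    intro F f
    symm
    rw [Finset.sum_mul]
    apply Finset.sum_congr rfl; intro x _
    rw [Finset.sum_mul]
    apply Finset.sum_congr rfl; intro y _
    rw [Finset.mul_sum]
  have fac_left : ∀ (f : Fin n → ℝ) (F : Fin n → Fin n → ℝ),
      (∑ x, ∑ y, ∑ z, f x * F y z) = (∑ x, f x) * (∑ y, ∑ z, F y z) := by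
    intro f F
    symm
    rw [Finset.sum_mul]
    apply Finset.sum_congr rfl; intro x _
    rw [Finset.mul_sum]
    apply Finset.sum_congr rfl; intro y _
    rw [Finset.mul_sum]
  have fac2 : ∀ (f g : Fin n → ℝ), (∑ x, ∑ y, f x * g y) = (∑ x, f x) * (∑ y, g y) :=
    fun f g => (Finset.sum_mul_sum _ _ _ _).symm
  have hTrA : A.trace = ∑ x, A x x := by simp [Matrix.trace, Matrix.diag]
  have hTrB : B.trace = ∑ x, B x x := by simp [Matrix.trace, Matrix.diag]
  have hTrC : C.trace = ∑ x, C x x := by simp [Matrix.trace, Matrix.diag]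
  have hTAB : (A * B).trace = ∑ x, ∑ y, A x y * B y x := by
    simp [Matrix.trace, Matrix.diag, Matrix.mul_apply]
  have hTBC : (B * C).trace = ∑ x, ∑ y, B x y * C y x := by
    simp [Matrix.trace, Matrix.diag, Matrix.mul_apply]
  have hTCA : (C * A).trace = ∑ x, ∑ y, C x y * A y x := by
    simp [Matrix.trace, Matrix.diag, Matrix.mul_apply]
  have hTABC : (A * B * C).trace = ∑ x, ∑ y, ∑ z, A x y * B y z * C z x := by
    simp only [Matrix.trace, Matrix.diag, Matrix.mul_apply, Finset.sum_mul]
    apply Finset.sum_congr rfl; intro x _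
    rw [Finset.sum_comm]
  -- the 15 sums
  have e1 : (∑ x, ∑ y, ∑ z, A x x * B y y * C z z)
      = (∑ x, A x x) * (∑ x, B x x) * (∑ x, C x x) := by
    rw [fac_right, fac2]
  have e2 : (∑ x, ∑ y, ∑ z, A x x * B y z * C y z)
      = (∑ x, A x x) * (∑ x, ∑ y, B x y * C y x) := by
    have h1 : (∑ x, ∑ y, ∑ z, A x x * B y z * C y z)
        = ∑ x, ∑ y, ∑ z, A x x * (B y z * C y z) := by
      apply Finset.sum_congr rfl; intro u _
      apply Finset.sum_congr rfl; intro v _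
      apply Finset.sum_congr rfl; intro w _
      ring
    rw [h1, fac_left]
    congr 1
    apply Finset.sum_congr rfl; intro u _
    apply Finset.sum_congr rfl; intro v _
    rw [hC' v u]
  have e3 : (∑ x, ∑ y, ∑ z, A x x * B y z * C z y)
      = (∑ x, A x x) * (∑ x, ∑ y, B x y * C y x) := by
    have h1 : (∑ x, ∑ y, ∑ z, A x x * B y z * C z y)
        = ∑ x, ∑ y, ∑ z, A x x * (B y z * C z y) := by
      apply Finset.sum_congr rfl; intro u _
      apply Finset.sum_congr rfl; intro v _
      apply Finset.sum_congr rfl; intro w _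
      ring
    rw [h1, fac_left]
  have e4 : (∑ x, ∑ y, ∑ z, A x y * B x y * C z z)
      = (∑ x, ∑ y, A x y * B y x) * (∑ x, C x x) := by
    rw [fac_right]
    congr 1
    apply Finset.sum_congr rfl; intro u _
    apply Finset.sum_congr rfl; intro v _
    rw [hB' u v]
  have e7 : (∑ x, ∑ y, ∑ z, A x y * B y x * C z z)
      = (∑ x, ∑ y, A x y * B y x) * (∑ x, C x x) := by
    rw [fac_right]
  have e12 : (∑ x, ∑ y, ∑ z, A x y * B z z * C x y)
      = (∑ x, ∑ y, C x y * A y x) * (∑ x, B x x) := by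
    have h1 : (∑ x, ∑ y, ∑ z, A x y * B z z * C x y)
        = ∑ x, ∑ y, ∑ z, (A x y * C x y) * B z z := by
      apply Finset.sum_congr rfl; intro u _
      apply Finset.sum_congr rfl; intro v _
      apply Finset.sum_congr rfl; intro w _
      ring
    rw [h1, fac_right]
    congr 1
    apply Finset.sum_congr rfl; intro u _
    apply Finset.sum_congr rfl; intro v _
    rw [hA' u v]; ring
  have e15 : (∑ x, ∑ y, ∑ z, A x y * B z z * C y x)
      = (∑ x, ∑ y, C x y * A y x) * (∑ x, B x x) := by
    have h1 : (∑ x, ∑ y, ∑ z, A x y * B z z * C y x)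
        = ∑ x, ∑ y, ∑ z, (A x y * C y x) * B z z := by
      apply Finset.sum_congr rfl; intro u _
      apply Finset.sum_congr rfl; intro v _
      apply Finset.sum_congr rfl; intro w _
      ring
    rw [h1, fac_right]
    congr 1
    apply Finset.sum_congr rfl; intro u _
    apply Finset.sum_congr rfl; intro v _
    rw [hA' u v, hC' u v]; ring
  have e5 : (∑ x, ∑ y, ∑ z, A x y * B x z * C y z)
      = ∑ x, ∑ y, ∑ z, A x y * B y z * C z x := by
    rw [Finset.sum_comm]
    apply Finset.sum_congr rfl; intro u _
    apply Finset.sum_congr rfl; intro v _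
    apply Finset.sum_congr rfl; intro w _
    rw [hA' u v, hC' w u]
  have e6 : (∑ x, ∑ y, ∑ z, A x y * B x z * C z y)
      = ∑ x, ∑ y, ∑ z, A x y * B y z * C z x := by
    rw [Finset.sum_comm]
    apply Finset.sum_congr rfl; intro u _
    apply Finset.sum_congr rfl; intro v _
    apply Finset.sum_congr rfl; intro w _
    rw [hA' u v]
  have e8 : (∑ x, ∑ y, ∑ z, A x y * B z x * C y z)
      = ∑ x, ∑ y, ∑ z, A x y * B y z * C z x := by
    rw [Finset.sum_comm]
    apply Finset.sum_congr rfl; intro u _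
    apply Finset.sum_congr rfl; intro v _
    apply Finset.sum_congr rfl; intro w _
    rw [hA' u v, hB' v w, hC' w u]
  have e9 : (∑ x, ∑ y, ∑ z, A x y * B z x * C z y)
      = ∑ x, ∑ y, ∑ z, A x y * B y z * C z x := by
    rw [Finset.sum_comm]
    apply Finset.sum_congr rfl; intro u _
    apply Finset.sum_congr rfl; intro v _
    apply Finset.sum_congr rfl; intro w _
    rw [hA' u v, hB' v w]
  have e10 : (∑ x, ∑ y, ∑ z, A x y * B y z * C x z)
      = ∑ x, ∑ y, ∑ z, A x y * B y z * C z x := by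
    apply Finset.sum_congr rfl; intro u _
    apply Finset.sum_congr rfl; intro v _
    apply Finset.sum_congr rfl; intro w _
    rw [hC' w u]
  have e11 : (∑ x, ∑ y, ∑ z, A x y * B z y * C x z)
      = ∑ x, ∑ y, ∑ z, A x y * B y z * C z x := by
    apply Finset.sum_congr rfl; intro u _
    apply Finset.sum_congr rfl; intro v _
    apply Finset.sum_congr rfl; intro w _
    rw [hB' v w, hC' w u]
  have e14 : (∑ x, ∑ y, ∑ z, A x y * B z y * C z x)
      = ∑ x, ∑ y, ∑ z, A x y * B y z * C z x := by
    apply Finset.sum_congr rfl; intro u _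
    apply Finset.sum_congr rfl; intro v _
    apply Finset.sum_congr rfl; intro w _
    rw [hB' v w]
  rw [e1, e2, e3, e4, e5, e6, e7, e8, e9, e10, e11, e12, e14, e15,
    hTrA, hTrB, hTrC, hTAB, hTBC, hTCA, hTABC]
  ring


/-- For a standard Gaussian random vector `y` in `ℝ^n` and symmetric `n × n` real
matrices `A, B, C`, the expectation of `(yᵀ A y)(yᵀ B y)(yᵀ C y)` equals
`tr(A)tr(B)tr(C) + 8 tr(ABC) + 2(tr(AB)tr(C) + tr(BC)tr(A) + tr(CA)tr(B))`. -/
theorem gaussian_sextic_expectation (n : ℕ) (A B C : Matrix (Fin n) (Fin n) ℝ)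
    (hA : A.IsSymm) (hB : B.IsSymm) (hC : C.IsSymm) :
    (∫ y : Fin n → ℝ,
        (y ⬝ᵥ A.mulVec y) * (y ⬝ᵥ B.mulVec y) * (y ⬝ᵥ C.mulVec y) *
          (Real.exp (-(∑ i, y i ^ 2) / 2) / Real.sqrt ((2 * π) ^ n)))
      = A.trace * B.trace * C.trace + 8 * (A * B * C).trace +
          2 * ((A * B).trace * C.trace + (B * C).trace * A.trace +
            (C * A).trace * B.trace) := by
  classical
  have expand1 : ∀ (S : Fin n → Fin n → ℝ) (R : ℝ),
      (∑ i, ∑ j, S i j) * R = ∑ i, ∑ j, S i j * R := by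
    intro S R
    rw [Finset.sum_mul]
    exact Finset.sum_congr rfl fun i _ => Finset.sum_mul _ _ _
  have expand2 : ∀ (S : Fin n → Fin n → ℝ) (R : ℝ),
      R * (∑ i, ∑ j, S i j) = ∑ i, ∑ j, R * S i j := by
    intro S R
    rw [Finset.mul_sum]
    exact Finset.sum_congr rfl fun i _ => Finset.mul_sum _ _ _
  have key : (fun y : Fin n → ℝ =>
      (y ⬝ᵥ A.mulVec y) * (y ⬝ᵥ B.mulVec y) * (y ⬝ᵥ C.mulVec y) *
        (Real.exp (-(∑ i, y i ^ 2) / 2) / Real.sqrt ((2 * π) ^ n)))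
    = fun y : Fin n → ℝ => ∑ i, ∑ j, ∑ k, ∑ l, ∑ m, ∑ p,
        A i j * B k l * C m p *
          ((∏ x, y x ^ ([i, j, k, l, m, p] : List (Fin n)).count x) *
            (Real.exp (-(∑ i, y i ^ 2) / 2) / Real.sqrt ((2 * π) ^ n))) := by
    funext y
    have hq : ∀ (M : Matrix (Fin n) (Fin n) ℝ),
        y ⬝ᵥ M.mulVec y = ∑ i, ∑ j, M i j * (y i * y j) := by
      intro M
      simp only [dotProduct, Matrix.mulVec, Finset.mul_sum]
      apply Finset.sum_congr rfl; intro i _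
      apply Finset.sum_congr rfl; intro j _
      ring
    rw [show (y ⬝ᵥ A.mulVec y) * (y ⬝ᵥ B.mulVec y) * (y ⬝ᵥ C.mulVec y) *
        (Real.exp (-(∑ i, y i ^ 2) / 2) / Real.sqrt ((2 * π) ^ n))
      = (∑ i, ∑ j, A i j * (y i * y j)) *
        ((∑ k, ∑ l, B k l * (y k * y l)) *
          ((∑ m, ∑ p, C m p * (y m * y p)) *
            (Real.exp (-(∑ i, y i ^ 2) / 2) / Real.sqrt ((2 * π) ^ n)))) by
        rw [hq A, hq B, hq C]; ring]
    rw [expand1]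
    apply Finset.sum_congr rfl; intro i _
    apply Finset.sum_congr rfl; intro j _
    rw [expand1, expand2]
    apply Finset.sum_congr rfl; intro k _
    apply Finset.sum_congr rfl; intro l _
    rw [expand1, expand2, expand2]
    apply Finset.sum_congr rfl; intro m _
    apply Finset.sum_congr rfl; intro p _
    rw [← prod_map_count]
    simp only [List.map_cons, List.map_nil, List.prod_cons, List.prod_nil]
    ring
  rw [key]
  have I0 : ∀ (L : List (Fin n)) (c : ℝ),
      Integrable (fun y : Fin n → ℝ => c * ((∏ x, y x ^ L.count x) *
        (Real.exp (-(∑ i, y i ^ 2) / 2) / Real.sqrt ((2 * π) ^ n)))) :=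
    fun L c => (integrable_mono L).const_mul c
  have step : (∫ y : Fin n → ℝ, ∑ i, ∑ j, ∑ k, ∑ l, ∑ m, ∑ p,
        A i j * B k l * C m p *
          ((∏ x, y x ^ ([i, j, k, l, m, p] : List (Fin n)).count x) *
            (Real.exp (-(∑ i, y i ^ 2) / 2) / Real.sqrt ((2 * π) ^ n))))
      = ∑ i, ∑ j, ∑ k, ∑ l, ∑ m, ∑ p,
        A i j * B k l * C m p * MM [i, j, k, l, m, p] := by
    rw [integral_finset_sum _ (fun i _ => integrable_finset_sum _ (fun j _ =>
      integrable_finset_sum _ (fun k _ => integrable_finset_sum _ (fun l _ =>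
      integrable_finset_sum _ (fun m _ => integrable_finset_sum _ (fun p _ => I0 _ _))))))]
    apply Finset.sum_congr rfl; intro i _
    rw [integral_finset_sum _ (fun j _ => integrable_finset_sum _ (fun k _ =>
      integrable_finset_sum _ (fun l _ => integrable_finset_sum _ (fun m _ =>
      integrable_finset_sum _ (fun p _ => I0 _ _)))))]
    apply Finset.sum_congr rfl; intro j _
    rw [integral_finset_sum _ (fun k _ => integrable_finset_sum _ (fun l _ =>
      integrable_finset_sum _ (fun m _ => integrable_finset_sum _ (fun p _ => I0 _ _))))]
    apply Finset.sum_congr rfl; intro k _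
    rw [integral_finset_sum _ (fun l _ => integrable_finset_sum _ (fun m _ =>
      integrable_finset_sum _ (fun p _ => I0 _ _)))]
    apply Finset.sum_congr rfl; intro l _
    rw [integral_finset_sum _ (fun m _ => integrable_finset_sum _ (fun p _ => I0 _ _))]
    apply Finset.sum_congr rfl; intro m _
    rw [integral_finset_sum _ (fun p _ => I0 _ _)]
    apply Finset.sum_congr rfl; intro p _
    rw [MeasureTheory.integral_const_mul, integral_monomial]
  rw [step]
  simp only [MM6]
  exact final_sum A B C hA hB hC
end

section
/- For a positive definite symmetric matrix Σ with Σ = P D P^T where P is orthogonal and D = diag(d_1,...,d_n) with d_i > 0, and for any natural number k ≥ 1 and symmetric matrix V, the directional derivative of the k-th power map at Σ in direction V satisfies ∂_V pow_k(Σ) := Σ^{l} V Σ^{k-1-l} summed over l = 0,...,k-1, and equals P (δ ∘ (P^T V P)) P^T where δ is the matrix with entries δ(i,j) = (d_i^k - d_j^k)/(d_i - d_j) if d_i ≠ d_j and k d_i^{k-1} if d_i = d_j, and ∘ denotes the Hadamard (entrywise) product. -/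
/-!
Conjugation by the orthogonal `P` commutes with powers, so `S ^ l = P D ^ l Pᵀ` and every
summand is `P (D ^ l M D ^ (k-1-l)) Pᵀ` with `M = Pᵀ V P`. Sandwiching between diagonal
matrices scales entry `(i, j)` of `M`, so the sum is the Hadamard product of `M` with the
matrix of two-variable geometric sums `∑ d_i ^ l d_j ^ (k-1-l)`, which is the divided
difference of `t ↦ t ^ k` at `d_i, d_j`.
-/

open Matrix Finset

theorem geom_sum₂_eq_ite {K : Type*} [Field K] [DecidableEq K] (x y : K) (k : ℕ) :
    ∑ l ∈ range k, x ^ l * y ^ (k - 1 - l)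
      = if x = y then (k : K) * x ^ (k - 1) else (x ^ k - y ^ k) / (x - y) := by
  split_ifs with h
  · rw [h, geom_sum₂_self]
  · exact geom₂_sum h k

theorem Matrix.sum_diagonal_mul_mul_diagonal {ι m n R : Type*} [Fintype m] [Fintype n]
    [DecidableEq m] [DecidableEq n] [CommSemiring R] (s : Finset ι) (f : ι → m → R)
    (g : ι → n → R) (M : Matrix m n R) :
    ∑ l ∈ s, diagonal (f l) * M * diagonal (g l)
      = (of fun i j => ∑ l ∈ s, f l i * g l j) ⊙ M := by
  ext i j
  simp only [sum_apply, mul_diagonal, diagonal_mul, hadamard_apply, of_apply, sum_mul]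
  exact sum_congr rfl fun l _ => by ring

theorem deriv_pow_spectral_general (n : ℕ) (S P V : Matrix (Fin n) (Fin n) ℝ)
    (d : Fin n → ℝ) (hP : P * Pᵀ = 1)
    (hS : S = P * Matrix.diagonal d * Pᵀ) (k : ℕ) :
    ∑ l ∈ Finset.range k, S ^ l * V * S ^ (k - 1 - l)
      = P * (Matrix.hadamard
          (Matrix.of fun i j =>
            if d i = d j then (k : ℝ) * d i ^ (k - 1)
            else (d i ^ k - d j ^ k) / (d i - d j))
          (Pᵀ * V * P)) * Pᵀ := by
  let U : (Matrix (Fin n) (Fin n) ℝ)ˣ := ⟨P, Pᵀ, hP, mul_eq_one_comm.mp hP⟩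
  have hpow (l : ℕ) : S ^ l = P * diagonal (d ^ l) * Pᵀ := by
    rw [hS, ← diagonal_pow]
    exact U.conj_pow (diagonal d) l
  calc ∑ l ∈ range k, S ^ l * V * S ^ (k - 1 - l)
      = P * (∑ l ∈ range k,
          diagonal (d ^ l) * (Pᵀ * V * P) * diagonal (d ^ (k - 1 - l))) * Pᵀ := by
        simp only [hpow, mul_sum, sum_mul, Matrix.mul_assoc]
    _ = _ := by
        simp only [sum_diagonal_mul_mul_diagonal, Pi.pow_apply, geom_sum₂_eq_ite]

/-- Differential of the `k`-th power map at an SPD matrix `S = P D Pᵀ`: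
`∂_V pow_k(S) = ∑_{l=0}^{k-1} S^l V S^{k-1-l} = P (δ ∘ Pᵀ V P) Pᵀ`,
where `δ(i,j) = (d_i^k - d_j^k)/(d_i - d_j)` if `d_i ≠ d_j` and `k d_i^{k-1}` otherwise,
and `∘` denotes the Hadamard product. -/
theorem deriv_pow_spectral (n : ℕ) (S P V : Matrix (Fin n) (Fin n) ℝ)
    (d : Fin n → ℝ) (hd : ∀ i, 0 < d i) (hP : P * Pᵀ = 1)
    (hS : S = P * Matrix.diagonal d * Pᵀ) (hSpd : S.PosDef)
    (hV : V.IsSymm) (k : ℕ) (hk : 1 ≤ k) :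
    ∑ l ∈ Finset.range k, S ^ l * V * S ^ (k - 1 - l)
      = P * (Matrix.hadamard
          (Matrix.of fun i j =>
            if d i = d j then (k : ℝ) * d i ^ (k - 1)
            else (d i ^ k - d j ^ k) / (d i - d j))
          (Pᵀ * V * P)) * Pᵀ :=
  deriv_pow_spectral_general n S P V d hP hS k
end

section
/- Let Σ = P D P^T be an SPD matrix with P orthogonal and D diagonal with positive entries. For real powers θ₁, θ₂ ≠ 0 and symmetric matrices X, Y, define the mixed-power-Euclidean bilinear form g(X,Y) = (1/(θ₁θ₂)) tr(∂_X pow_{θ₁}(Σ) · ∂_Y pow_{θ₂}(Σ)), where ∂_V pow_θ(Σ) = P(δ_θ ∘ P^T V P)P^T with δ_θ(i,j) = (d_i^θ - d_j^θ)/(d_i - d_j) (= θ d_i^{θ-1} on the diagonal case d_i = d_j). Then g is a symmetric positive definite bilinear form on symmetric matrices, and moreover g is symmetric in the parameters: the form with (θ₁,θ₂) equals the form with (θ₂,θ₁). -/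
open Matrix

lemma aux_quot_pos {θ x y : ℝ} (hθ : θ ≠ 0) (hx : 0 < x) (hy : 0 < y)
    (hxy : x ≠ y) : 0 < ((x ^ θ - y ^ θ) / (x - y)) / θ := by
  rw [div_div]
  rcases hxy.lt_or_gt with h | h <;> rcases hθ.lt_or_gt with ht | ht
  · exact div_pos (sub_pos.2 (Real.rpow_lt_rpow_of_neg hx h ht))
      (mul_pos_of_neg_of_neg (sub_neg.2 h) ht)
  · exact div_pos_of_neg_of_neg (sub_neg.2 (Real.rpow_lt_rpow hx.le h ht))
      (mul_neg_of_neg_of_pos (sub_neg.2 h) ht)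
  · exact div_pos_of_neg_of_neg (sub_neg.2 (Real.rpow_lt_rpow_of_neg hy h ht))
      (mul_neg_of_pos_of_neg (sub_pos.2 h) ht)
  · exact div_pos (sub_pos.2 (Real.rpow_lt_rpow hy.le h ht))
      (mul_pos (sub_pos.2 h) ht)

/-- The mixed-power-Euclidean bilinear form
`g(X,Y) = (1/(θ₁θ₂)) tr(∂_X pow_{θ₁}(S) · ∂_Y pow_{θ₂}(S))`, where
`∂_V pow_θ(S) = P (δ_θ ∘ Pᵀ V P) Pᵀ` for the spectral decomposition `S = P D Pᵀ`,
is a symmetric positive definite bilinear form on symmetric matrices, and is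
symmetric in the parameters `(θ₁, θ₂)`. -/
theorem mixed_power_euclidean_metric (n : ℕ) (S P : Matrix (Fin n) (Fin n) ℝ)
    (d : Fin n → ℝ) (hd : ∀ i, 0 < d i) (hP : P * Pᵀ = 1)
    (hS : S = P * Matrix.diagonal d * Pᵀ) (hSpd : S.PosDef)
    (θ₁ θ₂ : ℝ) (hθ₁ : θ₁ ≠ 0) (hθ₂ : θ₂ ≠ 0) :
    let δ : ℝ → Matrix (Fin n) (Fin n) ℝ := fun θ =>
      Matrix.of fun i j =>
        if d i = d j then θ * d i ^ (θ - 1) else (d i ^ θ - d j ^ θ) / (d i - d j)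
    let g : ℝ → ℝ → Matrix (Fin n) (Fin n) ℝ → Matrix (Fin n) (Fin n) ℝ → ℝ :=
      fun a b X Y => (1 / (a * b)) *
        ((P * Matrix.hadamard (δ a) (Pᵀ * X * P) * Pᵀ) *
          (P * Matrix.hadamard (δ b) (Pᵀ * Y * P) * Pᵀ)).trace
    (∀ X Y : Matrix (Fin n) (Fin n) ℝ, X.IsSymm → Y.IsSymm →
        g θ₁ θ₂ X Y = g θ₁ θ₂ Y X) ∧
    (∀ X : Matrix (Fin n) (Fin n) ℝ, X.IsSymm → 0 ≤ g θ₁ θ₂ X X) ∧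
    (∀ X : Matrix (Fin n) (Fin n) ℝ, X.IsSymm → (g θ₁ θ₂ X X = 0 → X = 0)) ∧
    (∀ X Y : Matrix (Fin n) (Fin n) ℝ, X.IsSymm → Y.IsSymm →
        g θ₁ θ₂ X Y = g θ₂ θ₁ X Y) := by
  intro δ g
  have hPtP : Pᵀ * P = 1 := mul_eq_one_comm.mp hP
  -- symmetry of δ
  have hδsymm : ∀ θ (i j : Fin n), δ θ i j = δ θ j i := by
    intro θ i j
    simp only [δ, Matrix.of_apply]
    rcases eq_or_ne (d i) (d j) with h | h
    · rw [if_pos h, if_pos h.symm, h]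
    · rw [if_neg h, if_neg h.symm, ← neg_sub (d j ^ θ), ← neg_sub (d j), neg_div_neg_eq]
  -- positivity of δ θ / θ
  have hδpos : ∀ θ, θ ≠ 0 → ∀ i j : Fin n, 0 < δ θ i j / θ := by
    intro θ hθ i j
    simp only [δ, Matrix.of_apply]
    rcases eq_or_ne (d i) (d j) with h | h
    · rw [if_pos h, mul_comm, mul_div_assoc, div_self hθ, mul_one]
      exact Real.rpow_pos_of_pos (hd i) _
    · rw [if_neg h]
      exact aux_quot_pos hθ (hd i) (hd j) h
  -- trace simplification
  have htr : ∀ M N : Matrix (Fin n) (Fin n) ℝ,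
      ((P * M * Pᵀ) * (P * N * Pᵀ)).trace = (M * N).trace := by
    intro M N
    have h1 : (P * M * Pᵀ) * (P * N * Pᵀ) = P * (M * N) * Pᵀ := by
      calc (P * M * Pᵀ) * (P * N * Pᵀ) = P * M * (Pᵀ * P) * N * Pᵀ := by
            simp only [Matrix.mul_assoc]
        _ = P * (M * N) * Pᵀ := by rw [hPtP, Matrix.mul_one]; simp only [Matrix.mul_assoc]
    rw [h1, Matrix.trace_mul_cycle, ← Matrix.mul_assoc, hPtP, Matrix.one_mul]
  -- g as a double sum
  have hg : ∀ a b (X Y : Matrix (Fin n) (Fin n) ℝ), g a b X Y =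
      ∑ i, ∑ j, (1 / (a * b)) * (δ a i j * (Pᵀ * X * P) i j *
        (δ b j i * (Pᵀ * Y * P) j i)) := by
    intro a b X Y
    show (1 / (a * b)) * _ = _
    rw [htr]
    rw [Matrix.trace]
    simp only [Matrix.diag, Matrix.mul_apply, Matrix.hadamard_apply, Finset.mul_sum]
  -- symmetry of conjugated matrices
  have hA : ∀ X : Matrix (Fin n) (Fin n) ℝ, X.IsSymm →
      ∀ i j : Fin n, (Pᵀ * X * P) i j = (Pᵀ * X * P) j i := by
    intro X hX i j
    have : (Pᵀ * X * P).IsSymm := by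
      unfold Matrix.IsSymm
      rw [Matrix.transpose_mul, Matrix.transpose_mul, Matrix.transpose_transpose,
        hX.eq, Matrix.mul_assoc]
    exact (Matrix.IsSymm.apply this i j).symm ▸ (congrFun (congrFun this.eq j) i).symm
  constructor
  · -- symmetry in X Y
    intro X Y hX hY
    rw [hg, hg, Finset.sum_comm]
    refine Finset.sum_congr rfl fun i _ => Finset.sum_congr rfl fun j _ => ?_
    rw [hδsymm θ₁ j i, hδsymm θ₂ i j, hA X hX j i, hA Y hY i j]
    ring
  refine ⟨?_, ?_, ?_⟩
  · -- nonneg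
    intro X hX
    rw [hg]
    refine Finset.sum_nonneg fun i _ => Finset.sum_nonneg fun j _ => ?_
    rw [hδsymm θ₂ j i, hA X hX j i]
    have := mul_pos (hδpos θ₁ hθ₁ i j) (hδpos θ₂ hθ₂ i j)
    have h2 : (1 / (θ₁ * θ₂)) * (δ θ₁ i j * (Pᵀ * X * P) i j *
        (δ θ₂ i j * (Pᵀ * X * P) i j))
        = (δ θ₁ i j / θ₁ * (δ θ₂ i j / θ₂)) * ((Pᵀ * X * P) i j)^2 := by
      field_simp
    rw [h2]
    positivity
  · -- definiteness
    intro X hX hzero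
    rw [hg] at hzero
    have hterm : ∀ i j : Fin n, (1 / (θ₁ * θ₂)) * (δ θ₁ i j * (Pᵀ * X * P) i j *
        (δ θ₂ j i * (Pᵀ * X * P) j i))
        = (δ θ₁ i j / θ₁ * (δ θ₂ i j / θ₂)) * ((Pᵀ * X * P) i j)^2 := by
      intro i j
      rw [hδsymm θ₂ j i, hA X hX j i]
      field_simp
    simp only [hterm] at hzero
    have hAzero : Pᵀ * X * P = 0 := by
      ext i j
      have h1 := (Finset.sum_eq_zero_iff_of_nonneg (fun i _ =>
        Finset.sum_nonneg fun j _ => by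
          have := mul_pos (hδpos θ₁ hθ₁ i j) (hδpos θ₂ hθ₂ i j)
          positivity)).mp hzero i (Finset.mem_univ i)
      have h2 := (Finset.sum_eq_zero_iff_of_nonneg (fun j _ => by
          have := mul_pos (hδpos θ₁ hθ₁ i j) (hδpos θ₂ hθ₂ i j)
          positivity)).mp h1 j (Finset.mem_univ j)
      have hpos := mul_pos (hδpos θ₁ hθ₁ i j) (hδpos θ₂ hθ₂ i j)
      have := (mul_eq_zero.mp h2).resolve_left (ne_of_gt hpos)
      simpa [pow_eq_zero_iff] using this
    have : X = P * (Pᵀ * X * P) * Pᵀ := by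
      calc X = (P * Pᵀ) * X * (P * Pᵀ) := by rw [hP, Matrix.one_mul, Matrix.mul_one]
        _ = P * (Pᵀ * X * P) * Pᵀ := by simp only [Matrix.mul_assoc]
    rw [this, hAzero, Matrix.mul_zero, Matrix.zero_mul]
  · -- symmetry in parameters
    intro X Y hX hY
    rw [hg, hg]
    refine Finset.sum_congr rfl fun i _ => Finset.sum_congr rfl fun j _ => ?_
    rw [hδsymm θ₂ j i, hδsymm θ₁ j i]
    ring
end

section
/- For Σ SPD with spectral decomposition Σ = PDP^T and θ ∈ ℝ nonzero, and symmetric V, the matrix Σ^{-θ/2} ∂_V pow_θ(Σ) Σ^{-θ/2} equals P(ε_θ ∘ P^T V P)P^T, where ε_θ(i,j) = (d_i d_j)^{-θ/2} (d_i^θ - d_j^θ)/(d_i - d_j) (interpreted as θ d_i^{-1} when d_i = d_j), and all entries ε_θ(i,j)/θ are strictly positive. -/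
open Matrix

/-! Conjugating by the orthogonal `P` reduces everything to the eigenbasis, where
`Spow (-(θ/2))` is the diagonal matrix of the `d i ^ (-(θ/2))` and two-sided multiplication by a
diagonal matrix rescales a Hadamard product entrywise. Entrywise, `ε` is `δ` rescaled by
`d i ^ (-(θ/2)) * d j ^ (-(θ/2))`; its positivity after dividing by `θ` is the monotonicity of
`x ↦ x ^ θ` on `(0, ∞)`, increasing for `θ > 0` and decreasing for `θ < 0`. -/

theorem Matrix.conj_mul_conj {R m n : Type*} [Semiring R] [Fintype m] [Fintype n]
    [DecidableEq n] {P : Matrix m n R} {Q : Matrix n m R} (hQP : Q * P = 1)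
    (A B : Matrix n n R) : P * A * Q * (P * B * Q) = P * (A * B) * Q := by
  simp only [Matrix.mul_assoc, ← Matrix.mul_assoc Q P, hQP, Matrix.one_mul]

theorem Matrix.diagonal_mul_hadamard_mul_diagonal {R n : Type*} [CommSemiring R] [Fintype n]
    [DecidableEq n] (e f : n → R) (A M : Matrix n n R) :
    diagonal e * (A ⊙ M) * diagonal f = (of fun i j => e i * A i j * f j) ⊙ M := by
  ext i j
  simp only [diagonal_mul, mul_diagonal, hadamard_apply, of_apply]
  ring

namespace Real

theorem rpow_sub_rpow_div_sub_div_pos {a b θ : ℝ} (ha : 0 < a) (hb : 0 < b) (hab : a ≠ b)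
    (hθ : θ ≠ 0) : 0 < (a ^ θ - b ^ θ) / (a - b) / θ := by
  wlog hlt : a < b generalizing a b
  · have hba : b < a := lt_of_le_of_ne (not_lt.mp hlt) hab.symm
    rw [← neg_sub b a, ← neg_sub (b ^ θ), neg_div_neg_eq]
    exact this hb ha hab.symm hba
  rcases hθ.lt_or_gt with hneg | hpos
  · have hpow : b ^ θ < a ^ θ := rpow_lt_rpow_of_neg ha hlt hneg
    exact div_pos_of_neg_of_neg (div_neg_of_pos_of_neg (by linarith) (by linarith)) hneg
  · have hpow : a ^ θ < b ^ θ := rpow_lt_rpow ha.le hlt hpos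
    exact div_pos (div_pos_of_neg_of_neg (by linarith) (by linarith)) hpos

theorem rpow_neg_half_mul_divDiff_mul_rpow_neg_half {a b : ℝ} (θ : ℝ) (ha : 0 < a)
    (hb : 0 < b) :
    a ^ (-(θ / 2)) * (if a = b then θ * a ^ (θ - 1) else (a ^ θ - b ^ θ) / (a - b)) *
        b ^ (-(θ / 2)) =
      if a = b then θ * a⁻¹ else (a * b) ^ (-(θ / 2)) * ((a ^ θ - b ^ θ) / (a - b)) := by
  split_ifs with hab
  · subst hab
    have hexp : a ^ (-(θ / 2)) * a ^ (θ - 1) * a ^ (-(θ / 2)) = a⁻¹ := by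
      rw [← rpow_add ha, ← rpow_add ha, ← rpow_neg_one]
      ring_nf
    linear_combination θ * hexp
  · rw [mul_rpow ha.le hb.le]
    ring

end Real

theorem power_affine_transport_general (n : ℕ) (P V : Matrix (Fin n) (Fin n) ℝ)
    (d : Fin n → ℝ) (hd : ∀ i, 0 < d i) (hP : P * Pᵀ = 1)
    (θ : ℝ) (hθ : θ ≠ 0) :
    let δ : Matrix (Fin n) (Fin n) ℝ := Matrix.of fun i j =>
      if d i = d j then θ * d i ^ (θ - 1) else (d i ^ θ - d j ^ θ) / (d i - d j)
    let ε : Matrix (Fin n) (Fin n) ℝ := Matrix.of fun i j =>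
      if d i = d j then θ * (d i)⁻¹
      else (d i * d j) ^ (-(θ / 2)) * ((d i ^ θ - d j ^ θ) / (d i - d j))
    let Spow : ℝ → Matrix (Fin n) (Fin n) ℝ := fun a =>
      P * Matrix.diagonal (fun i => d i ^ a) * Pᵀ
    Spow (-(θ / 2)) * (P * Matrix.hadamard δ (Pᵀ * V * P) * Pᵀ) * Spow (-(θ / 2))
        = P * Matrix.hadamard ε (Pᵀ * V * P) * Pᵀ ∧
    ∀ i j, 0 < ε i j / θ := by
  intro δ ε Spow
  have hPtP : Pᵀ * P = 1 := mul_eq_one_comm.mp hP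
  have hε : ε = of fun i j => d i ^ (-(θ / 2)) * δ i j * d j ^ (-(θ / 2)) := by
    ext i j
    exact (Real.rpow_neg_half_mul_divDiff_mul_rpow_neg_half θ (hd i) (hd j)).symm
  refine ⟨?_, fun i j => ?_⟩
  · rw [Matrix.conj_mul_conj hPtP, Matrix.conj_mul_conj hPtP,
      Matrix.diagonal_mul_hadamard_mul_diagonal, hε]
  · by_cases hij : d i = d j
    · simp only [ε, of_apply, if_pos hij, mul_div_cancel_left₀ _ hθ, inv_pos, hd i]
    · simp only [ε, of_apply, if_neg hij, mul_div_assoc]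
      exact mul_pos (Real.rpow_pos_of_pos (mul_pos (hd i) (hd j)) _)
        (Real.rpow_sub_rpow_div_sub_div_pos (hd i) (hd j) hij hθ)

/-- For `S = P D Pᵀ` SPD and `θ ≠ 0`,
`S^{-θ/2} ∂_V pow_θ(S) S^{-θ/2} = P (ε_θ ∘ Pᵀ V P) Pᵀ` where
`ε_θ(i,j) = (d_i d_j)^{-θ/2} (d_i^θ - d_j^θ)/(d_i - d_j)` (interpreted as
`θ d_i⁻¹` when `d_i = d_j`), and all entries `ε_θ(i,j)/θ` are strictly positive. -/
theorem power_affine_transport (n : ℕ) (S P V : Matrix (Fin n) (Fin n) ℝ)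
    (d : Fin n → ℝ) (hd : ∀ i, 0 < d i) (hP : P * Pᵀ = 1)
    (hS : S = P * Matrix.diagonal d * Pᵀ) (hSpd : S.PosDef)
    (hV : V.IsSymm) (θ : ℝ) (hθ : θ ≠ 0) :
    let δ : Matrix (Fin n) (Fin n) ℝ := Matrix.of fun i j =>
      if d i = d j then θ * d i ^ (θ - 1) else (d i ^ θ - d j ^ θ) / (d i - d j)
    let ε : Matrix (Fin n) (Fin n) ℝ := Matrix.of fun i j =>
      if d i = d j then θ * (d i)⁻¹
      else (d i * d j) ^ (-(θ / 2)) * ((d i ^ θ - d j ^ θ) / (d i - d j))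
    let Spow : ℝ → Matrix (Fin n) (Fin n) ℝ := fun a =>
      P * Matrix.diagonal (fun i => d i ^ a) * Pᵀ
    Spow (-(θ / 2)) * (P * Matrix.hadamard δ (Pᵀ * V * P) * Pᵀ) * Spow (-(θ / 2))
        = P * Matrix.hadamard ε (Pᵀ * V * P) * Pᵀ ∧
    ∀ i j, 0 < ε i j / θ :=
  power_affine_transport_general n P V d hd hP θ hθ
end
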